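/- arXiv:2501.03202 — 2 statements merged into one kernel-verified Lean document; each statement's English description precedes it below -/
import Mathlib

section
/- Let E' be the curve y² = x³ + x over ℂ and let φ(x,y) = (x, (x+x⁻¹, y(1-x⁻²))) for x ≠ 0. If two distinct affine points (x,y) and (x',y') of E' with x, x' ≠ 0 satisfy φ(x,y) = φ(x',y'), then x = x' ∈ {1,-1}; moreover the points of E' with x = 1 are (1, ±√2) and both map under (x+x⁻¹, y(1-x⁻²)) to (2,0), and the points with x = -1 are (-1, ±√(-2)) and both map to (-2,0). -/
/-- For `φ(x,y) = (x, (x+x⁻¹, y(1-x⁻²)))` on the affine curve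
`E' : y² = x³ + x` (with `x ≠ 0`): if two distinct points of `E'` have the same image
under `φ`, then their `x`-coordinates agree and lie in `{1, -1}`; the points of `E'`
with `x = 1` are `(1, ±√2)` (i.e. `y² = 2`) and both map under
`(x+x⁻¹, y(1-x⁻²))` to `(2,0)`; the points with `x = -1` are `(-1, ±√(-2))`
(i.e. `y² = -2`) and both map to `(-2,0)`. -/
theorem stmt6 :
    (∀ x y x' y' : ℂ, y ^ 2 = x ^ 3 + x → y' ^ 2 = x' ^ 3 + x' → x ≠ 0 → x' ≠ 0 →
      (x, y) ≠ (x', y') →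
      (x, (x + 1 / x, y * (1 - 1 / x ^ 2))) = (x', (x' + 1 / x', y' * (1 - 1 / x' ^ 2))) →
      x = x' ∧ (x = 1 ∨ x = -1)) ∧
    (∀ y : ℂ, y ^ 2 = (1 : ℂ) ^ 3 + 1 ↔ y ^ 2 = 2) ∧
    (∀ y : ℂ, y ^ 2 = 2 →
      ((1 : ℂ) + 1 / 1, y * (1 - 1 / (1 : ℂ) ^ 2)) = (2, 0)) ∧
    (∀ y : ℂ, y ^ 2 = (-1 : ℂ) ^ 3 + (-1) ↔ y ^ 2 = -2) ∧
    (∀ y : ℂ, y ^ 2 = -2 →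
      ((-1 : ℂ) + 1 / (-1), y * (1 - 1 / (-1 : ℂ) ^ 2)) = (-2, 0)) := by
  refine ⟨?_, by intro y; norm_num, by intro y _; norm_num, by intro y; norm_num, by intro y _; norm_num⟩
  intro x y x' y' he he' hx hx' hne heq
  have h1 : x = x' := (Prod.mk.injEq .. ▸ heq).1
  subst h1
  refine ⟨rfl, ?_⟩
  have hy : y ≠ y' := fun h => hne (by rw [h])
  have h2 : y * (1 - 1 / x ^ 2) = y' * (1 - 1 / x ^ 2) := by
    have := (Prod.mk.injEq .. ▸ heq).2
    exact (Prod.mk.injEq .. ▸ this).2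
  have h3 : (1 : ℂ) - 1 / x ^ 2 = 0 := by
    by_contra h
    exact hy (mul_right_cancel₀ h h2)
  have hx2 : (x - 1) * (x + 1) = 0 := by
    field_simp at h3
    linear_combination h3
  rcases mul_eq_zero.mp hx2 with h | h
  · left; linear_combination h
  · right; linear_combination h
end

section
/- Let f₁, …, f_r be nonzero homogeneous linear forms on ℂⁿ that are linearly dependent, i.e. ∑ cᵢfᵢ = 0 with not all cᵢ zero, and let ωᵢ = dfᵢ/fᵢ on the complement of the union of their zero hyperplanes. Then ∑_{j=1}^r (-1)^j ω₁ ∧ ⋯ ∧ ω̂ⱼ ∧ ⋯ ∧ ωᵣ = 0. -/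
/-- Orlik–Solomon relation: let `f₀, …, f_r` be nonzero linear forms on
`ℂⁿ` that are linearly dependent, and `ωᵢ = dfᵢ/fᵢ` on the complement of their zero
hyperplanes. Then `∑ⱼ (-1)^j ω₀ ∧ ⋯ ∧ ω̂ⱼ ∧ ⋯ ∧ ω_r = 0`. The `r`-form
`ω_{i₁} ∧ ⋯ ∧ ω_{i_r}` evaluated at a point `p` (with all `fᵢ(p) ≠ 0`) on tangent
vectors `v₁, …, v_r` is `det (f_{i_l}(v_k)/f_{i_l}(p))_{l,k}`; omitting the `j`-th form
is encoded by `Fin.succAbove`. -/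
theorem stmt17 (n r : ℕ) (f : Fin (r + 1) → ((Fin n → ℂ) →ₗ[ℂ] ℂ))
    (hne : ∀ i, f i ≠ 0) (hdep : ¬ LinearIndependent ℂ f)
    (p : Fin n → ℂ) (hp : ∀ i, f i p ≠ 0) (v : Fin r → (Fin n → ℂ)) :
    ∑ j : Fin (r + 1), (-1 : ℂ) ^ (j : ℕ) *
        Matrix.det (Matrix.of fun i k : Fin r =>
          f (j.succAbove i) (v k) / f (j.succAbove i) p) = 0 := by
  obtain ⟨g, hg, i₀, hi₀⟩ := Fintype.not_linearIndependent_iff.mp hdep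
  set A : Matrix (Fin (r + 1)) (Fin (r + 1)) ℂ :=
    Matrix.of (fun i => Fin.cons 1 (fun k => f i (v k) / f i p)) with hA
  have hsum : ∀ x : Fin n → ℂ, ∑ i, g i * f i x = 0 := by
    intro x
    have := congrArg (fun (L : (Fin n → ℂ) →ₗ[ℂ] ℂ) => L x) hg
    simpa using this
  have hdet : A.det = 0 := by
    by_contra h
    have hT : A.transpose.det ≠ 0 := by rwa [Matrix.det_transpose]
    have hmv : A.transpose.mulVec (fun i => g i * f i p) = 0 := by
      funext k
      simp only [Matrix.mulVec, Matrix.transpose_apply, dotProduct, hA,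
        Matrix.of_apply]
      refine Fin.cases ?_ (fun m => ?_) k
      · simpa using hsum p
      · have : ∀ i, (Fin.cons (1 : ℂ) (fun k => f i (v k) / f i p) : Fin (r+1) → ℂ) m.succ * (g i * f i p)
            = g i * f i (v m) := by
          intro i
          rw [Fin.cons_succ, div_mul_eq_mul_div, div_eq_iff (hp i)]
          ring
        simp only [this]
        simpa using hsum (v m)
    have := Matrix.eq_zero_of_mulVec_eq_zero hT hmv
    have h0 : g i₀ * f i₀ p = 0 := congrFun this i₀
    exact hi₀ ((mul_eq_zero.mp h0).resolve_right (hp i₀))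
  rw [Matrix.det_succ_column_zero] at hdet
  have : ∀ j : Fin (r + 1), A j 0 = 1 := fun j => rfl
  calc ∑ j : Fin (r + 1), (-1 : ℂ) ^ (j : ℕ) *
        Matrix.det (Matrix.of fun i k : Fin r =>
          f (j.succAbove i) (v k) / f (j.succAbove i) p)
      = ∑ j : Fin (r + 1), (-1 : ℂ) ^ (j : ℕ) * A j 0 *
          Matrix.det (A.submatrix j.succAbove Fin.succ) := by
        refine Finset.sum_congr rfl fun j _ => ?_
        rw [this j, mul_one]
        congr 1
    _ = 0 := hdet
end
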